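/- arXiv:2406.19527 — 3 statements merged into one kernel-verified Lean document; each statement's English description precedes it below -/
import Mathlib

section
/- Let p(x) = αx² + βx + γ be a real quadratic polynomial with max{|α|,|β|,|γ|} ≥ m > 0. Then for every ε > 0, the Lebesgue measure of {x ∈ [0,1] : |p(x)| ≤ ε} is at most 8·(ε/m)^{1/2} + 8·(ε/m). -/
/-!
Take three points `x₁ < x₂ < x₃` of the sublevel set `S` with both gaps at least `r`; a compact
set of measure more than `2r` has such points (its minimum, its maximum, and a point in between).
Lagrange interpolation at these nodes writes each coefficient of `p` as a combination of the
values `p(xᵢ)` with weights of order `1 / ((x₂ - x₁)(x₃ - x₂))`, so the largest coefficient,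
at least `m`, is at most `4ε / r²`. Hence `|S| ≤ 2r` as soon as `m r² > 4ε`.
-/

open MeasureTheory

theorem IsCompact.exists_spaced_triple_of_lt_volume {S : Set ℝ} (hS : IsCompact S) {r : ℝ}
    (hr : 0 ≤ r) (hvol : ENNReal.ofReal (2 * r) < volume S) :
    ∃ x₁ ∈ S, ∃ x₂ ∈ S, ∃ x₃ ∈ S, x₁ + r ≤ x₂ ∧ x₂ + r ≤ x₃ := by
  have hne : S.Nonempty := nonempty_of_measure_ne_zero (ne_bot_of_gt hvol)
  refine ⟨sInf S, hS.sInf_mem hne, ?_⟩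
  by_contra! hgap
  have hcover : S ⊆ Set.Ico (sInf S) (sInf S + r) ∪ Set.Ioc (sSup S - r) (sSup S) := by
    intro x hx
    have hlo : sInf S ≤ x := csInf_le hS.bddBelow hx
    have hhi : x ≤ sSup S := le_csSup hS.bddAbove hx
    rcases lt_or_ge x (sInf S + r) with h | h
    · exact Or.inl ⟨hlo, h⟩
    · exact Or.inr ⟨by linarith [hgap x hx (sSup S) (hS.sSup_mem hne) h], hhi⟩
  have : volume S ≤ ENNReal.ofReal (2 * r) :=
    calc volume S
        ≤ volume (Set.Ico (sInf S) (sInf S + r)) + volume (Set.Ioc (sSup S - r) (sSup S)) :=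
          (measure_mono hcover).trans (measure_union_le _ _)
      _ = ENNReal.ofReal (2 * r) := by
          rw [Real.volume_Ico, Real.volume_Ioc, ← ENNReal.ofReal_add (by linarith) (by linarith)]
          ring_nf
  exact hvol.not_ge this

theorem abs_mul_le_of_eq_second_difference {a b c u v w δ : ℝ} (ha : 0 < a) (hb : 0 < b)
    (hu : |u| ≤ δ) (hv : |v| ≤ δ) (hw : |w| ≤ δ)
    (hc : c * (a * b * (a + b)) = u * b - v * (a + b) + w * a) :
    |c| * (a * b) ≤ 2 * δ := by
  have hsum : |u * b - v * (a + b) + w * a| ≤ 2 * δ * (a + b) :=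
    calc |u * b - v * (a + b) + w * a| ≤ |u| * b + |v| * (a + b) + |w| * a := by
          have := abs_add_three (u * b) (-(v * (a + b))) (w * a)
          rw [abs_neg, abs_mul, abs_mul, abs_mul, abs_of_pos hb, abs_of_pos (add_pos ha hb),
            abs_of_pos ha, ← sub_eq_add_neg] at this
          exact this
      _ ≤ δ * b + δ * (a + b) + δ * a := by gcongr
      _ = 2 * δ * (a + b) := by ring
  have hab : 0 < a + b := add_pos ha hb
  rw [← hc, abs_mul, abs_of_pos (mul_pos (mul_pos ha hb) hab), ← mul_assoc] at hsum
  exact le_of_mul_le_mul_right hsum hab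

theorem abs_mul_le_mul_of_abs_le {x y ε K : ℝ} (hx : |x| ≤ ε) (hy : |y| ≤ K) :
    |x * y| ≤ ε * K := by
  rw [abs_mul]
  exact mul_le_mul hx hy (abs_nonneg y) ((abs_nonneg x).trans hx)

theorem max_abs_coeff_mul_gaps_le_of_abs_quadratic_le {α β γ ε x₁ x₂ x₃ : ℝ}
    (hx₁ : x₁ ∈ Set.Icc (0 : ℝ) 1) (hx₂ : x₂ ∈ Set.Icc (0 : ℝ) 1) (hx₃ : x₃ ∈ Set.Icc (0 : ℝ) 1)
    (h₁₂ : x₁ < x₂) (h₂₃ : x₂ < x₃)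
    (hp₁ : |α * x₁ ^ 2 + β * x₁ + γ| ≤ ε) (hp₂ : |α * x₂ ^ 2 + β * x₂ + γ| ≤ ε)
    (hp₃ : |α * x₃ ^ 2 + β * x₃ + γ| ≤ ε) :
    max |α| (max |β| |γ|) * ((x₂ - x₁) * (x₃ - x₂)) ≤ 4 * ε := by
  obtain ⟨h₁0, h₁1⟩ := hx₁
  obtain ⟨h₂0, h₂1⟩ := hx₂
  obtain ⟨h₃0, h₃1⟩ := hx₃
  have ha : 0 < x₂ - x₁ := sub_pos.2 h₁₂
  have hb : 0 < x₃ - x₂ := sub_pos.2 h₂₃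
  have hε : 0 ≤ ε := (abs_nonneg _).trans hp₁
  -- The three Lagrange interpolation formulas, cleared of the denominators.
  have hα := abs_mul_le_of_eq_second_difference (c := α) ha hb hp₁ hp₂ hp₃ (by ring)
  have hβ := abs_mul_le_of_eq_second_difference (c := -β) ha hb
    (abs_mul_le_mul_of_abs_le hp₁ (K := 2) (y := x₂ + x₃) (abs_le.2 ⟨by linarith, by linarith⟩))
    (abs_mul_le_mul_of_abs_le hp₂ (K := 2) (y := x₁ + x₃) (abs_le.2 ⟨by linarith, by linarith⟩))
    (abs_mul_le_mul_of_abs_le hp₃ (K := 2) (y := x₁ + x₂) (abs_le.2 ⟨by linarith, by linarith⟩))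
    (by ring)
  have hγ := abs_mul_le_of_eq_second_difference (c := γ) ha hb
    (abs_mul_le_mul_of_abs_le hp₁ (K := 1) (y := x₂ * x₃) (by
      rw [abs_of_nonneg (by positivity)]; exact mul_le_one₀ h₂1 h₃0 h₃1))
    (abs_mul_le_mul_of_abs_le hp₂ (K := 1) (y := x₁ * x₃) (by
      rw [abs_of_nonneg (by positivity)]; exact mul_le_one₀ h₁1 h₃0 h₃1))
    (abs_mul_le_mul_of_abs_le hp₃ (K := 1) (y := x₁ * x₂) (by
      rw [abs_of_nonneg (by positivity)]; exact mul_le_one₀ h₁1 h₂0 h₂1))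
    (by ring)
  rw [abs_neg] at hβ
  rw [max_mul_of_nonneg _ _ (by positivity), max_mul_of_nonneg _ _ (by positivity)]
  exact max_le (by linarith) (max_le (by linarith) (by linarith))

/-- Quantitative anti-concentration for quadratic polynomials on `[0,1]`:
if `max {|α|,|β|,|γ|} ≥ m > 0`, then for every `ε > 0`,
`|{x ∈ [0,1] : |αx² + βx + γ| ≤ ε}| ≤ 8√(ε/m) + 8(ε/m)`. -/
theorem quadratic_sublevel_measure (α β γ m : ℝ) (hm : 0 < m)
    (hmax : m ≤ max |α| (max |β| |γ|)) (ε : ℝ) (hε : 0 < ε) :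
    volume {x ∈ Set.Icc (0 : ℝ) 1 | |α * x ^ 2 + β * x + γ| ≤ ε}
      ≤ ENNReal.ofReal (8 * Real.sqrt (ε / m) + 8 * (ε / m)) := by
  set S := {x ∈ Set.Icc (0 : ℝ) 1 | |α * x ^ 2 + β * x + γ| ≤ ε}
  have hS : IsCompact S := isCompact_Icc.inter_right (t := {x | |α * x ^ 2 + β * x + γ| ≤ ε})
    (isClosed_le (by fun_prop) continuous_const)
  by_contra! hlarge
  set r := 3 * Real.sqrt (ε / m)
  have hr : 0 < r := mul_pos three_pos (Real.sqrt_pos.2 (div_pos hε hm))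
  have hmr : m * (r * r) = 9 * ε := by
    rw [mul_mul_mul_comm, Real.mul_self_sqrt (by positivity)]
    field_simp
    ring
  have h2r : ENNReal.ofReal (2 * r) < volume S := by
    refine lt_of_le_of_lt (ENNReal.ofReal_le_ofReal ?_) hlarge
    linarith [div_pos hε hm]
  obtain ⟨x₁, hx₁, x₂, hx₂, x₃, hx₃, h₁₂, h₂₃⟩ := hS.exists_spaced_triple_of_lt_volume hr.le h2r
  have hcoeff := max_abs_coeff_mul_gaps_le_of_abs_quadratic_le hx₁.1 hx₂.1 hx₃.1
    (by linarith) (by linarith) hx₁.2 hx₂.2 hx₃.2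
  have hgaps : r * r ≤ (x₂ - x₁) * (x₃ - x₂) :=
    mul_le_mul (by linarith) (by linarith) hr.le (by linarith)
  have := (mul_le_mul hmax hgaps (mul_self_nonneg r) (hm.le.trans hmax)).trans hcoeff
  linarith
end

section
/- Let F be a (κ,α,ρ)-good family of continuous functions on ℝ and let I ⊂ ℝ be an interval such that (i) every f ∈ F satisfies sup_{s∈I} f(s) ≥ ρ, and (ii) for every s ∈ I, the number of f ∈ F with f(s) < ρ is at most M. Then for every 0 < ε < ρ, the measure of I_{F,ε} = {s ∈ I : ∃ f ∈ F with f(s) < ε} is at most κ·M·(ε/ρ)^α·|I|. -/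
/-!
Split the open set `{s ∈ (a,b) | f s < ρ}` into its connected components `(c,d)`. An endpoint
of a component lying inside `(a,b)` has `f ≥ ρ`, and if neither does then `(c,d) = (a,b)`; either
way `sup_[c,d] f ≥ ρ`, so goodness on `[c,d]` bounds the measure of `{f < ε} ∩ (c,d)` by
`κ (ε/ρ)^α (d - c)`. Summing over components, `|{f < ε} ∩ I| ≤ κ (ε/ρ)^α |{f < ρ} ∩ I|`. A
countable subfamily of `F` already covers `I_{F,ε}` (Lindelöf), and summing the last bound over
it costs the integral over `I` of the number of `f` with `f < ρ`, which is at most `M |I|`.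
-/

open MeasureTheory Set
open scoped ENNReal Topology

/-- A family `F` of continuous nonnegative functions on `ℝ` is `(κ,α,ρ)`-good
if on every interval `[a,b]`, the sublevel set `{f < ε}` of every `f ∈ F` has
measure at most `κ (ε / sup_I f)^α (b-a)`, for all `0 < ε < ρ`. -/
def IsGoodFamily (κ α ρ : ℝ) (F : Set (ℝ → ℝ)) : Prop :=
  (∀ f ∈ F, Continuous f ∧ ∀ s, 0 ≤ f s) ∧
  ∀ a b : ℝ, a ≤ b → ∀ f ∈ F, ∀ ε : ℝ, 0 < ε → ε < ρ →
    volume {s ∈ Icc a b | f s < ε}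
      ≤ ENNReal.ofReal (κ * (ε / sSup (f '' Icc a b)) ^ α * (b - a))

theorem Real.exists_connectedComponentIn_eq_Ioo {U : Set ℝ} {a b x : ℝ} (hU : IsOpen U)
    (hUab : U ⊆ Ioo a b) (hx : x ∈ U) :
    ∃ c d, connectedComponentIn U x = Ioo c d ∧ c ∉ U ∧ d ∉ U := by
  set C := connectedComponentIn U x
  have hCU : C ⊆ U := connectedComponentIn_subset U x
  have hCo : IsOpen C := hU.connectedComponentIn
  have hCc : IsConnected C := isConnected_connectedComponentIn_iff.2 hx
  have hbb : BddBelow C := ⟨a, fun y hy => (hUab (hCU hy)).1.le⟩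
  have hba : BddAbove C := ⟨b, fun y hy => (hUab (hCU hy)).2.le⟩
  have hc : sInf C ∉ C := fun h => by
    have hnear : ∀ᶠ y in 𝓝[<] sInf C, y ∈ C := nhdsWithin_le_nhds (hCo.mem_nhds h)
    obtain ⟨y, hyC, hy⟩ := (hnear.and self_mem_nhdsWithin).exists
    exact (csInf_le hbb hyC).not_gt hy
  have hd : sSup C ∉ C := fun h => by
    have hnear : ∀ᶠ y in 𝓝[>] sSup C, y ∈ C := nhdsWithin_le_nhds (hCo.mem_nhds h)
    obtain ⟨y, hyC, hy⟩ := (hnear.and self_mem_nhdsWithin).exists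
    exact (le_csSup hba hyC).not_gt hy
  have hCeq : C = Ioo (sInf C) (sSup C) := by
    refine (hCc.Ioo_csInf_csSup_subset hbb hba).antisymm' fun y hy => ?_
    obtain ⟨hcy, hyd⟩ := subset_Icc_csInf_csSup hbb hba hy
    exact ⟨hcy.lt_of_ne (by rintro rfl; exact hc hy), hyd.lt_of_ne (by rintro rfl; exact hd hy)⟩
  have hxC : x ∈ Ioo (sInf C) (sSup C) := hCeq ▸ mem_connectedComponentIn hx
  refine ⟨sInf C, sSup C, hCeq, fun hcU => hc ?_, fun hdU => hd ?_⟩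
  · have : Ico (sInf C) (sSup C) ⊆ U := by
      rw [← Ioo_insert_left (hxC.1.trans hxC.2), insert_subset_iff, ← hCeq]
      exact ⟨hcU, hCU⟩
    exact isPreconnected_Ico.subset_connectedComponentIn (Ioo_subset_Ico_self hxC) this
      ⟨le_rfl, hxC.1.trans hxC.2⟩
  · have : Ioc (sInf C) (sSup C) ⊆ U := by
      rw [← Ioo_insert_right (hxC.1.trans hxC.2), insert_subset_iff, ← hCeq]
      exact ⟨hdU, hCU⟩
    exact isPreconnected_Ioc.subset_connectedComponentIn (Ioo_subset_Ioc_self hxC) this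
      ⟨hxC.1.trans hxC.2, le_rfl⟩

namespace MeasureTheory

theorem measure_le_mul_of_forall_connectedComponentIn {X : Type*} [TopologicalSpace X]
    [LocallyConnectedSpace X] [TopologicalSpace.SeparableSpace X] [MeasurableSpace X]
    [OpensMeasurableSpace X] (μ : Measure X) {U A : Set X} (hU : IsOpen U) (hAU : A ⊆ U)
    {k : ℝ≥0∞} (h : ∀ x ∈ U, μ (A ∩ connectedComponentIn U x) ≤ k * μ (connectedComponentIn U x)) :
    μ A ≤ k * μ U := by
  set 𝒮 := connectedComponentIn U '' U
  have h𝒮U : ⋃₀ 𝒮 = U := by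
    rw [sUnion_image]
    exact (iUnion₂_subset fun x _ => connectedComponentIn_subset U x).antisymm
      fun x hx => mem_biUnion hx (mem_connectedComponentIn hx)
  have h𝒮disj : 𝒮.PairwiseDisjoint id := by
    rintro _ ⟨x, -, rfl⟩ _ ⟨y, -, rfl⟩ hne
    refine disjoint_left.2 fun z hzx hzy => hne ?_
    exact (connectedComponentIn_eq hzx).trans (connectedComponentIn_eq hzy).symm
  have h𝒮open : ∀ J ∈ 𝒮, IsOpen J := by
    rintro _ ⟨x, -, rfl⟩
    exact hU.connectedComponentIn
  have h𝒮c : 𝒮.Countable := h𝒮disj.countable_of_isOpen h𝒮open <| by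
    rintro _ ⟨x, hx, rfl⟩
    exact ⟨x, mem_connectedComponentIn hx⟩
  calc μ A = μ (⋃ J ∈ 𝒮, A ∩ J) := by
        rw [← inter_iUnion₂, ← sUnion_eq_biUnion, h𝒮U, inter_eq_left.2 hAU]
    _ ≤ ∑' J : 𝒮, μ (A ∩ J) := measure_biUnion_le μ h𝒮c _
    _ ≤ ∑' J : 𝒮, k * μ J := ENNReal.tsum_le_tsum fun ⟨_, x, hx, rfl⟩ => h x hx
    _ = k * μ U := by
        rw [ENNReal.tsum_mul_left, ← measure_sUnion h𝒮c h𝒮disj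
          fun J hJ => (h𝒮open J hJ).measurableSet, h𝒮U]

theorem tsum_measure_le_mul_of_encard_le {X ι : Type*} [MeasurableSpace X] [Countable ι]
    (μ : Measure X) {B : ι → Set X} {S : Set X} (hB : ∀ i, MeasurableSet (B i))
    (hS : MeasurableSet S) (hBS : ∀ i, B i ⊆ S) {M : ℕ∞}
    (hM : ∀ x ∈ S, {i | x ∈ B i}.encard ≤ M) :
    ∑' i, μ (B i) ≤ M * μ S := by
  have hcount : ∀ x, ∑' i, (B i).indicator 1 x = ({i | x ∈ B i}.encard : ℝ≥0∞) := fun x => by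
    rw [← ENNReal.tsum_set_one, tsum_subtype _ fun _ => (1 : ℝ≥0∞)]
    rfl
  calc ∑' i, μ (B i) = ∫⁻ x, ∑' i, (B i).indicator 1 x ∂μ := by
        rw [lintegral_tsum fun i => (measurable_one.indicator (hB i)).aemeasurable]
        simp only [lintegral_indicator_one (hB _)]
    _ ≤ ∫⁻ x, S.indicator (fun _ => (M : ℝ≥0∞)) x ∂μ := by
        refine lintegral_mono fun x => ?_
        rw [hcount]
        by_cases hx : x ∈ S
        · simpa [indicator_of_mem hx] using hM x hx
        · simp [indicator_of_notMem hx, fun i => mt (@hBS i x) hx]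
    _ = M * μ S := lintegral_indicator_const hS _

end MeasureTheory

theorem le_sSup_image_Icc_of_le_endpoints {f : ℝ → ℝ} {a b c d ρ : ℝ}
    (hf : ContinuousOn f (Icc c d)) (hcd : c ≤ d) (hac : a ≤ c) (hdb : d ≤ b)
    (hc : a < c → ρ ≤ f c) (hd : d < b → ρ ≤ f d) (hsup : ρ ≤ sSup (f '' Icc a b)) :
    ρ ≤ sSup (f '' Icc c d) := by
  have hbdd : BddAbove (f '' Icc c d) := (isCompact_Icc.image_of_continuousOn hf).bddAbove
  rcases hac.lt_or_eq with hac | rfl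
  · exact le_csSup_of_le hbdd (mem_image_of_mem f (left_mem_Icc.2 hcd)) (hc hac)
  rcases hdb.lt_or_eq with hdb | rfl
  · exact le_csSup_of_le hbdd (mem_image_of_mem f (right_mem_Icc.2 hcd)) (hd hdb)
  exact hsup

theorem volume_sublevel_le_of_le_sSup {f : ℝ → ℝ} {κ α ρ ε c d : ℝ} (hκ : 0 ≤ κ) (hα : 0 ≤ α)
    (hρ : 0 < ρ) (hε : 0 ≤ ε) (hcd : c ≤ d)
    (hgood : volume {s ∈ Icc c d | f s < ε}
      ≤ ENNReal.ofReal (κ * (ε / sSup (f '' Icc c d)) ^ α * (d - c)))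
    (hS : ρ ≤ sSup (f '' Icc c d)) :
    volume {s ∈ Icc c d | f s < ε} ≤ ENNReal.ofReal (κ * (ε / ρ) ^ α) * volume (Ioo c d) := by
  calc volume {s ∈ Icc c d | f s < ε}
      ≤ ENNReal.ofReal (κ * (ε / sSup (f '' Icc c d)) ^ α * (d - c)) := hgood
    _ ≤ ENNReal.ofReal (κ * (ε / ρ) ^ α * (d - c)) := by
        gcongr
        exact div_nonneg hε (hρ.le.trans hS)
    _ = ENNReal.ofReal (κ * (ε / ρ) ^ α) * volume (Ioo c d) := by
        rw [Real.volume_Ioo, ← ENNReal.ofReal_mul (by positivity)]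

theorem volume_sublevel_le_mul_volume_sublevel {f : ℝ → ℝ} {κ α ρ ε a b : ℝ}
    (hf : Continuous f) (hκ : 0 ≤ κ) (hα : 0 ≤ α) (hρ : 0 < ρ) (hε : 0 ≤ ε) (hερ : ε ≤ ρ)
    (hgood : ∀ c d, c ≤ d → volume {s ∈ Icc c d | f s < ε}
      ≤ ENNReal.ofReal (κ * (ε / sSup (f '' Icc c d)) ^ α * (d - c)))
    (hsup : ρ ≤ sSup (f '' Icc a b)) :
    volume {s ∈ Icc a b | f s < ε}
      ≤ ENNReal.ofReal (κ * (ε / ρ) ^ α) * volume {s ∈ Icc a b | f s < ρ} := by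
  set U := Ioo a b ∩ f ⁻¹' Iio ρ
  have hU : IsOpen U := isOpen_Ioo.inter (isOpen_Iio.preimage hf)
  have hcomp (x) (hx : x ∈ U) : volume (Ioo a b ∩ f ⁻¹' Iio ε ∩ connectedComponentIn U x)
      ≤ ENNReal.ofReal (κ * (ε / ρ) ^ α) * volume (connectedComponentIn U x) := by
    obtain ⟨c, d, hJ, hcU, hdU⟩ := Real.exists_connectedComponentIn_eq_Ioo hU inter_subset_left hx
    have hxcd : x ∈ Ioo c d := hJ ▸ mem_connectedComponentIn hx
    have hcd : c < d := hxcd.1.trans hxcd.2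
    obtain ⟨hac, hdb⟩ := (Ioo_subset_Ioo_iff hcd).1
      (hJ ▸ (connectedComponentIn_subset U x).trans inter_subset_left)
    have hS : ρ ≤ sSup (f '' Icc c d) :=
      le_sSup_image_Icc_of_le_endpoints hf.continuousOn hcd.le hac hdb
        (fun h => not_lt.1 fun hfc => hcU ⟨⟨h, hcd.trans_le hdb⟩, hfc⟩)
        (fun h => not_lt.1 fun hfd => hdU ⟨⟨hac.trans_lt hcd, h⟩, hfd⟩) hsup
    rw [hJ]
    calc volume (Ioo a b ∩ f ⁻¹' Iio ε ∩ Ioo c d) ≤ volume {s ∈ Icc c d | f s < ε} :=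
          measure_mono fun s ⟨⟨_, hs⟩, hscd⟩ => ⟨Ioo_subset_Icc_self hscd, hs⟩
      _ ≤ _ := volume_sublevel_le_of_le_sSup hκ hα hρ hε hcd.le (hgood c d hcd.le) hS
  calc volume {s ∈ Icc a b | f s < ε} = volume (Ioo a b ∩ f ⁻¹' Iio ε) :=
        measure_congr (Ioo_ae_eq_Icc.inter (Filter.EventuallyEq.refl _ _)).symm
    _ ≤ ENNReal.ofReal (κ * (ε / ρ) ^ α) * volume U :=
        measure_le_mul_of_forall_connectedComponentIn volume hU
          (inter_subset_inter_right _ (preimage_mono (Iio_subset_Iio hερ))) hcomp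
    _ ≤ ENNReal.ofReal (κ * (ε / ρ) ^ α) * volume {s ∈ Icc a b | f s < ρ} := by
        gcongr
        exact inter_subset_inter_left _ Ioo_subset_Icc_self

theorem good_family_sparse_covering_general (κ α ρ : ℝ) (F : Set (ℝ → ℝ)) (M : ℕ)
    (hκ : 0 < κ) (hα : 0 < α) (hρ : 0 < ρ)
    (hgood : IsGoodFamily κ α ρ F)
    (a b : ℝ)
    (hsup : ∀ f ∈ F, ρ ≤ sSup (f '' Icc a b))
    (hM : ∀ s ∈ Icc a b, ({f ∈ F | f s < ρ}).Finite ∧ Nat.card {f ∈ F | f s < ρ} ≤ M)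
    (ε : ℝ) (hε : 0 < ε) (hερ : ε < ρ) :
    volume {s ∈ Icc a b | ∃ f ∈ F, f s < ε}
      ≤ ENNReal.ofReal (κ * M * (ε / ρ) ^ α * (b - a)) := by
  obtain ⟨hcont, hgood⟩ := hgood
  obtain ⟨T, hTF, hTc, hTU⟩ := TopologicalSpace.isOpen_biUnion_countable F
    (fun f => f ⁻¹' Iio ε) fun f hf => isOpen_Iio.preimage (hcont f hf).1
  have : Countable T := hTc.to_subtype
  have hcover : {s ∈ Icc a b | ∃ f ∈ F, f s < ε} = ⋃ f ∈ T, {s ∈ Icc a b | f s < ε} := by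
    ext s
    simpa [and_comm] using fun hs : s ∈ Icc a b => (Set.ext_iff.1 hTU s).symm
  have hcount (s) (hs : s ∈ Icc a b) : {f : T | s ∈ {s ∈ Icc a b | f.1 s < ρ}}.encard ≤ M :=
    calc _ ≤ ((↑) ⁻¹' {f ∈ F | f s < ρ} : Set T).encard :=
          encard_le_encard fun f hf => ⟨hTF f.2, hf.2⟩
      _ ≤ {f ∈ F | f s < ρ}.encard := encard_preimage_val_le_encard_right _ _
      _ ≤ M := encard_le_coe_iff_finite_ncard_le.2 (Nat.card_coe_set_eq _ ▸ hM s hs)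
  calc volume {s ∈ Icc a b | ∃ f ∈ F, f s < ε}
      ≤ ∑' f : T, volume {s ∈ Icc a b | f.1 s < ε} := hcover ▸ measure_biUnion_le volume hTc _
    _ ≤ ∑' f : T, ENNReal.ofReal (κ * (ε / ρ) ^ α) * volume {s ∈ Icc a b | f.1 s < ρ} :=
        ENNReal.tsum_le_tsum fun f => volume_sublevel_le_mul_volume_sublevel (hcont f (hTF f.2)).1
          hκ.le hα.le hρ hε.le hερ.le (fun c d hcd => hgood c d hcd f (hTF f.2) ε hε hερ)
          (hsup f (hTF f.2))
    _ ≤ ENNReal.ofReal (κ * (ε / ρ) ^ α) * (M * volume (Icc a b)) := by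
        rw [ENNReal.tsum_mul_left]
        gcongr
        exact tsum_measure_le_mul_of_encard_le volume (fun f : T => measurableSet_Icc.inter
          (isOpen_Iio.preimage (hcont f (hTF f.2)).1).measurableSet) measurableSet_Icc
          (fun f => sep_subset _ _) hcount
    _ = ENNReal.ofReal (κ * M * (ε / ρ) ^ α * (b - a)) := by
        rw [Real.volume_Icc, ← ENNReal.ofReal_natCast, ← ENNReal.ofReal_mul (by positivity),
          ← ENNReal.ofReal_mul (by positivity)]
        ring_nf

/-- Sparse-covering estimate: if `F` is `(κ,α,ρ)`-good, every `f ∈ F` has sup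
at least `ρ` on `I = [a,b]`, and at most `M` members of `F` drop below `ρ` at
any point of `I`, then `|{s ∈ I : ∃ f ∈ F, f s < ε}| ≤ κ M (ε/ρ)^α |I|` for
all `0 < ε < ρ`. -/
theorem good_family_sparse_covering (κ α ρ : ℝ) (F : Set (ℝ → ℝ)) (M : ℕ)
    (hκ : 0 < κ) (hα : 0 < α) (hρ : 0 < ρ)
    (hgood : IsGoodFamily κ α ρ F)
    (a b : ℝ) (hab : a ≤ b)
    (hsup : ∀ f ∈ F, ρ ≤ sSup (f '' Icc a b))
    (hM : ∀ s ∈ Icc a b, ({f ∈ F | f s < ρ}).Finite ∧ Nat.card {f ∈ F | f s < ρ} ≤ M)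
    (ε : ℝ) (hε : 0 < ε) (hερ : ε < ρ) :
    volume {s ∈ Icc a b | ∃ f ∈ F, f s < ε}
      ≤ ENNReal.ofReal (κ * M * (ε / ρ) ^ α * (b - a)) :=
  good_family_sparse_covering_general κ α ρ F M hκ hα hρ hgood a b hsup hM ε hε hερ
end

section
/- Let L : [0,1] → ℝ be differentiable with L(0) = 0 and suppose L'(t) ≤ v·e^{L(t)} for all t ∈ [0,1], where 0 < v < 1. Then L'(t) ≤ v/(1 - t·v) for all t ∈ [0,1], and in particular L(1) ≤ -log(1 - v) ≤ v/(1-v). -/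
/-!
The substitution `u = e^{-L}` linearizes the differential inequality: `u' = -L' e^{-L} ≥ -v`,
so `u(t) ≥ 1 - tv`, i.e. `e^{L(t)} ≤ 1/(1 - tv)`. The bound on `L(1)` follows by taking logs,
and `-log(1 - v) ≤ v/(1 - v)` is `1 - 1/x ≤ log x` at `x = 1 - v`.
-/

open Set Real

theorem exp_neg_sub_mul_le_exp_neg {D : Set ℝ} (hD : Convex ℝ D) {L L' : ℝ → ℝ} {v : ℝ}
    (hderiv : ∀ t ∈ D, HasDerivAt L (L' t) t) (hineq : ∀ t ∈ D, L' t ≤ v * exp (L t))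
    {s t : ℝ} (hs : s ∈ D) (ht : t ∈ D) (hst : s ≤ t) :
    exp (-L s) - v * (t - s) ≤ exp (-L t) := by
  have hg : ∀ x ∈ D, HasDerivAt (fun x ↦ exp (-L x) + v * x) (v - L' x * exp (-L x)) x := by
    intro x hx
    exact (((hderiv x hx).neg.exp).add ((hasDerivAt_id x).const_mul v)).congr_deriv
      (by simp only [Pi.neg_apply]; ring)
  have hg_nonneg : ∀ x ∈ D, 0 ≤ v - L' x * exp (-L x) := by
    intro x hx
    have h := mul_le_mul_of_nonneg_right (hineq x hx) (exp_pos (-L x)).le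
    rw [mul_assoc, ← exp_add, add_neg_cancel, exp_zero, mul_one] at h
    linarith
  have hmono : MonotoneOn (fun x ↦ exp (-L x) + v * x) D :=
    monotoneOn_of_hasDerivWithinAt_nonneg hD
      (fun x hx ↦ (hg x hx).continuousAt.continuousWithinAt)
      (fun x hx ↦ (hg x (interior_subset hx)).hasDerivWithinAt)
      (fun x hx ↦ hg_nonneg x (interior_subset hx))
  have h : exp (-L s) + v * s ≤ exp (-L t) + v * t := hmono hs ht hst
  linarith

theorem neg_log_one_sub_le_div_one_sub {v : ℝ} (hv : v < 1) : -log (1 - v) ≤ v / (1 - v) := by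
  have hlog := one_sub_inv_le_log_of_pos (sub_pos.2 hv)
  have h : (1 - v)⁻¹ - 1 = v / (1 - v) := by field_simp [(sub_pos.2 hv).ne']; ring
  linarith

/-- Gronwall-type comparison: if `L(0) = 0` and `L'(t) ≤ v e^{L(t)}` on `[0,1]`
with `0 < v < 1`, then `L'(t) ≤ v/(1 - tv)` on `[0,1]`, and in particular
`L(1) ≤ -log(1-v) ≤ v/(1-v)`. -/
theorem gronwall_exp_comparison (L L' : ℝ → ℝ) (v : ℝ) (hv0 : 0 < v) (hv1 : v < 1)
    (hderiv : ∀ t ∈ Icc (0 : ℝ) 1, HasDerivAt L (L' t) t)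
    (hL0 : L 0 = 0)
    (hineq : ∀ t ∈ Icc (0 : ℝ) 1, L' t ≤ v * Real.exp (L t)) :
    (∀ t ∈ Icc (0 : ℝ) 1, L' t ≤ v / (1 - t * v)) ∧
      L 1 ≤ -Real.log (1 - v) ∧ -Real.log (1 - v) ≤ v / (1 - v) := by
  have hpos : ∀ t ∈ Icc (0 : ℝ) 1, 0 < 1 - t * v := fun t ht ↦ by nlinarith [ht.1, ht.2]
  have hexp : ∀ t ∈ Icc (0 : ℝ) 1, exp (L t) ≤ (1 - t * v)⁻¹ := by
    intro t ht
    have h := exp_neg_sub_mul_le_exp_neg (convex_Icc 0 1) hderiv hineq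
      (left_mem_Icc.2 zero_le_one) ht ht.1
    rw [hL0, neg_zero, exp_zero, sub_zero, mul_comm] at h
    simpa [exp_neg] using inv_anti₀ (hpos t ht) h
  refine ⟨fun t ht ↦ ?_, ?_, ?_⟩
  · calc L' t ≤ v * exp (L t) := hineq t ht
      _ ≤ v * (1 - t * v)⁻¹ := mul_le_mul_of_nonneg_left (hexp t ht) hv0.le
      _ = v / (1 - t * v) := (div_eq_mul_inv _ _).symm
  · rw [← log_inv, le_log_iff_exp_le (inv_pos.2 (by linarith))]
    simpa using hexp 1 (right_mem_Icc.2 zero_le_one)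
  · exact neg_log_one_sub_le_div_one_sub hv1
end
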